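/- Let φ(t) = Σ_k φ_k be defined by the Kuranishi recursion φ = Σ_ν η_ν t_ν + ½ ∂̄†[φ,φ]. Then for small t, φ(t) satisfies the Maurer-Cartan equation ∂̄φ(t) = ½[φ(t),φ(t)] if and only if H^{0,2}[φ(t),φ(t)] = 0, where H^{0,2} is the orthogonal projection onto the harmonic space in Λ^{0,2}⊗g^{1,0}. -/

import Mathlib

/-!
Kuranishi's recursion is majorised termwise by `m 2^{1-k} / k²` with `m ~ |t|`: the factor `k⁻²`
survives the convolution because `∑_{0<j<k} j⁻² (k-j)⁻² ≤ 8 / k²`. So for small `t` the series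
converges, and by the Cauchy product its sum `Φ` solves `Φ = φ₁ + ½ ∂̄†[Φ,Φ]`; hence `∂̄Φ` is half
the projection of `[Φ,Φ]` onto `im ∂̄`.

If `[Φ,Φ]` has no harmonic part, the defect `ψ = ∂̄Φ - ½[Φ,Φ]` is orthogonal to `im ∂̄` and to
the harmonic space, hence to `ker ∂̄ = im ∂̄ ⊕ harmonic`. The derivation rule and the Jacobi
identity give `∂̄ψ = -[ψ,Φ]`, so `ψ = -∂̄†[ψ,Φ]` and `‖ψ‖ ≤ ‖∂̄†‖ C ‖Φ‖ ‖ψ‖`, which forces `ψ = 0`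
once `Φ` is small. Conversely, a Maurer-Cartan `Φ` has `[Φ,Φ] = ∂̄(2Φ)` exact, hence orthogonal
to harmonic forms.
-/

open Finset LinearMap Submodule

theorem Finset.Nat.sum_antidiagonal_eq_sum_Ioo {M : Type*} [AddCommMonoid M] (f : ℕ × ℕ → M)
    (hf₁ : ∀ n, f (0, n) = 0) (hf₂ : ∀ n, f (n, 0) = 0) (n : ℕ) :
    ∑ p ∈ antidiagonal n, f p = ∑ j ∈ Ioo 0 n, f (j, n - j) := by
  rw [Nat.sum_antidiagonal_eq_sum_range_succ_mk]
  refine (sum_subset (fun j hj => ?_) fun j hj hj' => ?_).symm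
  · simp only [mem_Ioo, mem_range] at hj ⊢; omega
  · simp only [mem_Ioo, mem_range, not_and_or, not_lt] at hj hj'
    obtain rfl | rfl : j = 0 ∨ j = n := by omega
    · exact hf₁ _
    · simpa using hf₂ j

theorem ContinuousLinearMap.apply_tsum_tsum_eq_tsum_sum_antidiagonal {𝕜 E F G : Type*}
    [NontriviallyNormedField 𝕜] [NormedAddCommGroup E] [NormedSpace 𝕜 E]
    [NormedAddCommGroup F] [NormedSpace 𝕜 F] [NormedAddCommGroup G] [NormedSpace 𝕜 G]
    (Q : E →L[𝕜] F →L[𝕜] G) {f : ℕ → E} {g : ℕ → F} (hf : Summable f) (hg : Summable g)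
    (hfg : Summable fun p : ℕ × ℕ => Q (f p.1) (g p.2)) :
    Q (∑' i, f i) (∑' j, g j) = ∑' n, ∑ p ∈ antidiagonal n, Q (f p.1) (g p.2) := by
  have hinner : ∀ i, Q (f i) (∑' j, g j) = ∑' j, Q (f i) (g j) := fun i => (Q (f i)).map_tsum hg
  rw [← Q.flip_apply, (Q.flip (∑' j, g j)).map_tsum hf]
  simp only [Q.flip_apply, hinner]
  rw [← hfg.tsum_prod' fun i => hg.mapL (Q (f i))]
  conv_rhs => congr; ext n; rw [← sum_finset_coe, ← tsum_fintype (L := .unconditional _)]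
  rw [← HasAntidiagonal.sigmaAntidiagonalEquivProd.tsum_eq]
  exact (HasAntidiagonal.sigmaAntidiagonalEquivProd.summable_iff.mpr hfg).tsum_sigma'
    fun n => (hasSum_fintype _).summable

theorem sum_Ioo_inv_sq_mul_inv_sq_le (k : ℕ) :
    ∑ j ∈ Ioo 0 k, ((j : ℝ) ^ 2)⁻¹ * (((k - j : ℕ) : ℝ) ^ 2)⁻¹ ≤ 8 / (k : ℝ) ^ 2 := by
  have hterm : ∀ j ∈ Ioo 0 k, ((j : ℝ) ^ 2)⁻¹ * (((k - j : ℕ) : ℝ) ^ 2)⁻¹ ≤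
      2 / (k : ℝ) ^ 2 * (((j : ℝ) ^ 2)⁻¹ + (((k - j : ℕ) : ℝ) ^ 2)⁻¹) := by
    intro j hj
    obtain ⟨hj0, hjk⟩ := mem_Ioo.mp hj
    have hx : (0 : ℝ) < j := by exact_mod_cast hj0
    have hy : (0 : ℝ) < ((k - j : ℕ) : ℝ) := by exact_mod_cast Nat.sub_pos_of_lt hjk
    have hk : (k : ℝ) = j + ((k - j : ℕ) : ℝ) := by rw [Nat.cast_sub hjk.le]; ring
    rw [hk]
    field_simp
    -- `(x + y)² ≤ 2 (x² + y²)`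
    nlinarith [sq_nonneg ((j : ℝ) - ((k - j : ℕ) : ℝ)), mul_pos hx hy]
  have hmem : ∀ j ∈ Ioo 0 k, k - j ∈ Ioo 0 k := by
    intro j hj; simp only [mem_Ioo] at hj ⊢; omega
  have hinv : ∀ j ∈ Ioo 0 k, k - (k - j) = j := by
    intro j hj; simp only [mem_Ioo] at hj; omega
  have hreflect : ∑ j ∈ Ioo 0 k, (((k - j : ℕ) : ℝ) ^ 2)⁻¹ = ∑ j ∈ Ioo 0 k, ((j : ℝ) ^ 2)⁻¹ :=
    sum_nbij' (k - ·) (k - ·) hmem hmem hinv hinv fun _ _ => rfl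
  have hbasel : ∑ j ∈ Ioo 0 k, ((j : ℝ) ^ 2)⁻¹ ≤ 2 := by
    simpa using sum_Ioo_inv_sq_le (α := ℝ) 0 k
  calc _ ≤ ∑ j ∈ Ioo 0 k, 2 / (k : ℝ) ^ 2 * (((j : ℝ) ^ 2)⁻¹ + (((k - j : ℕ) : ℝ) ^ 2)⁻¹) :=
        sum_le_sum hterm
    _ = 2 / (k : ℝ) ^ 2 * (2 * ∑ j ∈ Ioo 0 k, ((j : ℝ) ^ 2)⁻¹) := by
        rw [← mul_sum, sum_add_distrib, hreflect, two_mul]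
    _ ≤ 2 / (k : ℝ) ^ 2 * (2 * 2) := by gcongr
    _ = 8 / (k : ℝ) ^ 2 := by ring

/-- Its value at `k = 0` is `0`, because `(0 : ℝ)⁻¹ = 0`. -/
noncomputable def kuranishiMajorant (m : ℝ) (k : ℕ) : ℝ :=
  m * (1 / 2) ^ (k - 1) * ((k : ℝ) ^ 2)⁻¹

theorem kuranishiMajorant_nonneg {m : ℝ} (hm : 0 ≤ m) (k : ℕ) : 0 ≤ kuranishiMajorant m k := by
  unfold kuranishiMajorant; positivity

theorem kuranishiMajorant_one (m : ℝ) : kuranishiMajorant m 1 = m := by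
  simp [kuranishiMajorant]

theorem kuranishiMajorant_le_geometric {m : ℝ} (hm : 0 ≤ m) (k : ℕ) :
    kuranishiMajorant m k ≤ 2 * m * (1 / 2) ^ k := by
  rcases k with _ | k
  · simp [kuranishiMajorant]; linarith
  · have hk : (((k + 1 : ℕ) : ℝ) ^ 2)⁻¹ ≤ 1 := inv_le_one_of_one_le₀ (one_le_pow₀ (by simp))
    calc kuranishiMajorant m (k + 1) ≤ m * (1 / 2) ^ k * 1 := by
          unfold kuranishiMajorant; rw [Nat.add_sub_cancel]; gcongr
      _ = 2 * m * (1 / 2) ^ (k + 1) := by ring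

theorem summable_kuranishiMajorant {m : ℝ} (hm : 0 ≤ m) : Summable (kuranishiMajorant m) :=
  .of_nonneg_of_le (kuranishiMajorant_nonneg hm) (kuranishiMajorant_le_geometric hm)
    (summable_geometric_two.mul_left _)

theorem tsum_kuranishiMajorant_le {m : ℝ} (hm : 0 ≤ m) : ∑' k, kuranishiMajorant m k ≤ 4 * m :=
  calc ∑' k, kuranishiMajorant m k ≤ ∑' k : ℕ, 2 * m * (1 / 2) ^ k :=
        (summable_kuranishiMajorant hm).tsum_le_tsum (kuranishiMajorant_le_geometric hm)
          (summable_geometric_two.mul_left _)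
    _ = 4 * m := by rw [tsum_mul_left, tsum_geometric_two]; ring

theorem sum_Ioo_kuranishiMajorant_mul_le (m : ℝ) (k : ℕ) :
    ∑ j ∈ Ioo 0 k, kuranishiMajorant m j * kuranishiMajorant m (k - j) ≤
      16 * m * kuranishiMajorant m k := by
  have hterm : ∀ j ∈ Ioo 0 k, kuranishiMajorant m j * kuranishiMajorant m (k - j) =
      2 * m ^ 2 * (1 / 2) ^ (k - 1) * (((j : ℝ) ^ 2)⁻¹ * (((k - j : ℕ) : ℝ) ^ 2)⁻¹) := by
    intro j hj
    obtain ⟨hj0, hjk⟩ := mem_Ioo.mp hj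
    have hpow : (1 / 2 : ℝ) ^ (j - 1) * (1 / 2) ^ (k - j - 1) = 2 * (1 / 2) ^ (k - 1) := by
      rw [← pow_add, show k - 1 = (j - 1 + (k - j - 1)) + 1 by omega, pow_succ]; ring
    unfold kuranishiMajorant
    linear_combination m ^ 2 * ((j : ℝ) ^ 2)⁻¹ * (((k - j : ℕ) : ℝ) ^ 2)⁻¹ * hpow
  rw [sum_congr rfl hterm, ← mul_sum]
  calc _ ≤ 2 * m ^ 2 * (1 / 2) ^ (k - 1) * (8 / (k : ℝ) ^ 2) := by
        gcongr; exact sum_Ioo_inv_sq_mul_inv_sq_le k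
    _ = 16 * m * kuranishiMajorant m k := by unfold kuranishiMajorant; ring

section KuranishiSeries

variable {𝕜 E : Type*} [NontriviallyNormedField 𝕜] [NormedAddCommGroup E] [NormedSpace 𝕜 E]
  (Q : E →L[𝕜] E →L[𝕜] E) {u : ℕ → E}

theorem norm_le_kuranishiMajorant (hu₀ : u 0 = 0)
    (hu : ∀ k, 2 ≤ k → u k = ∑ j ∈ Ioo 0 k, Q (u j) (u (k - j)))
    {m : ℝ} (hu₁ : ‖u 1‖ ≤ m) (hQm : 16 * ‖Q‖ * m ≤ 1) (k : ℕ) :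
    ‖u k‖ ≤ kuranishiMajorant m k := by
  have hm : 0 ≤ m := (norm_nonneg _).trans hu₁
  set a := kuranishiMajorant m
  induction k using Nat.strong_induction_on with
  | _ k ih =>
    match k with
    | 0 => simp [hu₀, a, kuranishiMajorant]
    | 1 => exact hu₁.trans_eq (kuranishiMajorant_one m).symm
    | k + 2 =>
      have hterm : ∀ j ∈ Ioo 0 (k + 2),
          ‖Q (u j) (u (k + 2 - j))‖ ≤ ‖Q‖ * (a j * a (k + 2 - j)) := by
        intro j hj
        have h₁ := ih j (mem_Ioo.mp hj).2
        have h₂ := ih (k + 2 - j) (by simp only [mem_Ioo] at hj; omega)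
        calc ‖Q (u j) (u (k + 2 - j))‖ ≤ ‖Q‖ * ‖u j‖ * ‖u (k + 2 - j)‖ := Q.le_opNorm₂ _ _
          _ ≤ ‖Q‖ * a j * a (k + 2 - j) := by
            gcongr; exact mul_nonneg (norm_nonneg _) (kuranishiMajorant_nonneg hm _)
          _ = _ := mul_assoc _ _ _
      calc ‖u (k + 2)‖ ≤ ∑ j ∈ Ioo 0 (k + 2), ‖Q‖ * (a j * a (k + 2 - j)) := by
            rw [hu _ le_add_self]
            exact (norm_sum_le _ _).trans (sum_le_sum hterm)
        _ ≤ ‖Q‖ * (16 * m * a (k + 2)) := by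
            rw [← mul_sum]; gcongr; exact sum_Ioo_kuranishiMajorant_mul_le m _
        _ = 16 * ‖Q‖ * m * a (k + 2) := by ring
        _ ≤ a (k + 2) := mul_le_of_le_one_left (kuranishiMajorant_nonneg hm _) hQm

theorem summable_norm_of_kuranishi (hu₀ : u 0 = 0)
    (hu : ∀ k, 2 ≤ k → u k = ∑ j ∈ Ioo 0 k, Q (u j) (u (k - j)))
    {m : ℝ} (hu₁ : ‖u 1‖ ≤ m) (hQm : 16 * ‖Q‖ * m ≤ 1) : Summable fun k => ‖u k‖ :=
  (summable_kuranishiMajorant ((norm_nonneg _).trans hu₁)).of_nonneg_of_le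
    (fun _ => norm_nonneg _) (norm_le_kuranishiMajorant Q hu₀ hu hu₁ hQm)

theorem norm_tsum_le_of_kuranishi (hu₀ : u 0 = 0)
    (hu : ∀ k, 2 ≤ k → u k = ∑ j ∈ Ioo 0 k, Q (u j) (u (k - j)))
    {m : ℝ} (hu₁ : ‖u 1‖ ≤ m) (hQm : 16 * ‖Q‖ * m ≤ 1) : ‖∑' k, u k‖ ≤ 4 * m := by
  have hm : 0 ≤ m := (norm_nonneg _).trans hu₁
  have hsum := summable_norm_of_kuranishi Q hu₀ hu hu₁ hQm
  calc ‖∑' k, u k‖ ≤ ∑' k, ‖u k‖ := norm_tsum_le_tsum_norm hsum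
    _ ≤ ∑' k, kuranishiMajorant m k :=
        hsum.tsum_le_tsum (norm_le_kuranishiMajorant Q hu₀ hu hu₁ hQm)
          (summable_kuranishiMajorant hm)
    _ ≤ 4 * m := tsum_kuranishiMajorant_le hm

theorem tsum_eq_add_apply_tsum_of_kuranishi [CompleteSpace E] (hu₀ : u 0 = 0)
    (hu : ∀ k, 2 ≤ k → u k = ∑ j ∈ Ioo 0 k, Q (u j) (u (k - j)))
    (hsum : Summable fun k => ‖u k‖) :
    ∑' k, u k = u 1 + Q (∑' k, u k) (∑' k, u k) := by
  have hs : Summable u := hsum.of_norm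
  have hprod : Summable fun p : ℕ × ℕ => Q (u p.1) (u p.2) := by
    refine .of_norm_bounded ((hsum.mul_of_nonneg hsum (fun _ => norm_nonneg _)
      (fun _ => norm_nonneg _)).mul_left ‖Q‖) fun p => ?_
    simpa only [mul_assoc] using Q.le_opNorm₂ (u p.1) (u p.2)
  have hconv : ∀ n, ∑ p ∈ antidiagonal n, Q (u p.1) (u p.2) = u n - if n = 1 then u 1 else 0 := by
    intro n
    rw [Nat.sum_antidiagonal_eq_sum_Ioo (fun p => Q (u p.1) (u p.2)) (by simp [hu₀])
      (by simp [hu₀])]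
    match n with
    | 0 => simp [hu₀]
    | 1 => simp [show Ioo 0 1 = ∅ by decide]
    | n + 2 => simp [← hu]
  have hsingle : HasSum (fun n => u n - if n = 1 then u 1 else 0) (∑' k, u k - u 1) :=
    hs.hasSum.sub (hasSum_ite_eq 1 (u 1))
  rw [Q.apply_tsum_tsum_eq_tsum_sum_antidiagonal hs hs hprod, tsum_congr hconv, hsingle.tsum_eq]
  abel

end KuranishiSeries

theorem Submodule.sub_starProjection_mem_orthogonal_of_le {𝕜 E : Type*} [RCLike 𝕜]
    [NormedAddCommGroup E] [InnerProductSpace 𝕜 E] {R K : Submodule 𝕜 E}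
    [R.HasOrthogonalProjection] (hRK : R ≤ K) {y : E} (hy : y ∈ (K ⊓ Rᗮ)ᗮ) :
    y - R.starProjection y ∈ Kᗮ := by
  rw [← sup_orthogonal_inf_of_hasOrthogonalProjection hRK, ← inf_orthogonal, inf_comm Rᗮ K]
  refine ⟨sub_starProjection_mem_orthogonal y, sub_mem hy ?_⟩
  exact orthogonal_le inf_le_right (le_orthogonal_orthogonal R (R.starProjection_apply_mem y))

namespace LinearMap

variable {𝕜 V W : Type*} [RCLike 𝕜] [NormedAddCommGroup V] [InnerProductSpace 𝕜 V]
  [NormedAddCommGroup W] [InnerProductSpace 𝕜 W] {d : V →ₗ[𝕜] W} {S : W →ₗ[𝕜] V}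

theorem apply_map_eq_self_of_mem_ker_orthogonal
    (hS : ∀ y ∈ range d, S y ∈ (ker d)ᗮ ∧ d (S y) = y) {x : V} (hx : x ∈ (ker d)ᗮ) :
    S (d x) = x := by
  obtain ⟨hSx, hdSx⟩ := hS (d x) ⟨x, rfl⟩
  have hker : S (d x) - x ∈ ker d := by simp [hdSx]
  exact sub_eq_zero.mp ((inf_orthogonal_eq_bot (ker d)).le ⟨hker, sub_mem hSx hx⟩)

theorem map_apply_eq_starProjection [(range d).HasOrthogonalProjection]
    (hS₁ : ∀ y ∈ range d, S y ∈ (ker d)ᗮ ∧ d (S y) = y)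
    (hS₂ : ∀ y ∈ (range d)ᗮ, S y = 0) (y : W) : d (S y) = (range d).starProjection y := by
  have hSy : S y = S ((range d).starProjection y) := by
    have := hS₂ _ (sub_starProjection_mem_orthogonal y)
    rwa [map_sub, sub_eq_zero] at this
  rw [hSy]
  exact (hS₁ _ (starProjection_apply_mem _ _)).2

theorem ker_eq_range_orthogonal [(range d).HasOrthogonalProjection]
    (hS₁ : ∀ y ∈ range d, S y ∈ (ker d)ᗮ ∧ d (S y) = y)
    (hS₂ : ∀ y ∈ (range d)ᗮ, S y = 0) : ker S = (range d)ᗮ := by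
  ext y
  refine ⟨fun hy => ?_, hS₂ y⟩
  rw [← starProjection_apply_eq_zero_iff, ← map_apply_eq_starProjection hS₁ hS₂, mem_ker.mp hy,
    map_zero]

end LinearMap

theorem map_maurerCartanDefect {𝕜 V₁ V₂ V₃ : Type*} [Field 𝕜] [CharZero 𝕜]
    [AddCommGroup V₁] [Module 𝕜 V₁] [AddCommGroup V₂] [Module 𝕜 V₂]
    [AddCommGroup V₃] [Module 𝕜 V₃] {d₁ : V₁ →ₗ[𝕜] V₂} {d₂ : V₂ →ₗ[𝕜] V₃}
    {b : V₁ →ₗ[𝕜] V₁ →ₗ[𝕜] V₂} {b2 : V₂ →ₗ[𝕜] V₁ →ₗ[𝕜] V₃} (hdd : d₂ ∘ₗ d₁ = 0)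
    (hder : ∀ x, d₂ (b x x) = (2 : 𝕜) • b2 (d₁ x) x) (hJac : ∀ x, b2 (b x x) x = 0) (x : V₁) :
    d₂ (d₁ x - (2 : 𝕜)⁻¹ • b x x) = -b2 (d₁ x - (2 : 𝕜)⁻¹ • b x x) x := by
  have hddx : d₂ (d₁ x) = 0 := LinearMap.congr_fun hdd x
  simp [hddx, hder, hJac, smul_smul]

theorem maurerCartan_iff_orthogonalProjection_eq_zero {𝕜 V₁ V₂ V₃ : Type*} [RCLike 𝕜]
    [NormedAddCommGroup V₁] [InnerProductSpace 𝕜 V₁]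
    [NormedAddCommGroup V₂] [InnerProductSpace 𝕜 V₂] [FiniteDimensional 𝕜 V₂]
    [NormedAddCommGroup V₃] [InnerProductSpace 𝕜 V₃]
    {d₁ : V₁ →ₗ[𝕜] V₂} {d₂ : V₂ →ₗ[𝕜] V₃} {S₁ : V₂ →ₗ[𝕜] V₁} {S₂ : V₃ →ₗ[𝕜] V₂}
    {b : V₁ →ₗ[𝕜] V₁ →ₗ[𝕜] V₂} {b2 : V₂ →ₗ[𝕜] V₁ →ₗ[𝕜] V₃} (hdd : d₂ ∘ₗ d₁ = 0)
    (hS₁a : ∀ y ∈ range d₁, S₁ y ∈ (ker d₁)ᗮ ∧ d₁ (S₁ y) = y)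
    (hS₁b : ∀ y ∈ (range d₁)ᗮ, S₁ y = 0)
    (hS₂a : ∀ y ∈ range d₂, S₂ y ∈ (ker d₂)ᗮ ∧ d₂ (S₂ y) = y)
    (hder : ∀ x, d₂ (b x x) = (2 : 𝕜) • b2 (d₁ x) x) (hJac : ∀ x, b2 (b x x) x = 0)
    {K C : ℝ} (hK : 0 ≤ K) (hS₂ : ∀ y, ‖S₂ y‖ ≤ K * ‖y‖)
    (hb2 : ∀ x y, ‖b2 x y‖ ≤ C * ‖x‖ * ‖y‖)
    {Φ : V₁} (hΦ : d₁ Φ = (2 : 𝕜)⁻¹ • d₁ (S₁ (b Φ Φ))) (hΦsmall : K * C * ‖Φ‖ < 1) :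
    d₁ Φ = (2 : 𝕜)⁻¹ • b Φ Φ ↔ (ker d₂ ⊓ ker S₁).orthogonalProjectionOnto (b Φ Φ) = 0 := by
  rw [orthogonalProjectionOnto_eq_zero_iff, ker_eq_range_orthogonal hS₁a hS₁b]
  have hRK : range d₁ ≤ ker d₂ := range_le_ker_iff.mpr hdd
  constructor
  · intro hmc
    have hmem : b Φ Φ ∈ range d₁ := ⟨(2 : 𝕜) • Φ, by simp [hmc, smul_smul]⟩
    exact orthogonal_le inf_le_right (le_orthogonal_orthogonal _ hmem)
  · intro hob
    set ψ := d₁ Φ - (2 : 𝕜)⁻¹ • b Φ Φ with hψ_def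
    have hψ : ψ ∈ (ker d₂)ᗮ := by
      have hψ' : ψ = -((2 : 𝕜)⁻¹ • (b Φ Φ - (range d₁).starProjection (b Φ Φ))) := by
        rw [hψ_def, hΦ, map_apply_eq_starProjection hS₁a hS₁b, smul_sub]; abel
      rw [hψ']
      exact neg_mem (smul_mem _ _ (sub_starProjection_mem_orthogonal_of_le hRK hob))
    have hψ_eq : ψ = -S₂ (b2 ψ Φ) := by
      rw [← map_neg, ← map_maurerCartanDefect hdd hder hJac,
        apply_map_eq_self_of_mem_ker_orthogonal hS₂a hψ]
    have hle : ‖ψ‖ ≤ K * C * ‖Φ‖ * ‖ψ‖ :=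
      calc ‖ψ‖ = ‖S₂ (b2 ψ Φ)‖ := by conv_lhs => rw [hψ_eq, norm_neg]
        _ ≤ K * ‖b2 ψ Φ‖ := hS₂ _
        _ ≤ K * (C * ‖ψ‖ * ‖Φ‖) := by gcongr; exact hb2 _ _
        _ = K * C * ‖Φ‖ * ‖ψ‖ := by ring
    have hψ0 : ψ = 0 := norm_le_zero_iff.mp (by nlinarith [norm_nonneg ψ])
    exact sub_eq_zero.mp hψ0

theorem kuranishi_maurerCartan_iff_harmonic_obstruction_general
    {V₁ V₂ V₃ : Type*}
    [NormedAddCommGroup V₁] [InnerProductSpace ℂ V₁] [FiniteDimensional ℂ V₁]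
    [NormedAddCommGroup V₂] [InnerProductSpace ℂ V₂] [FiniteDimensional ℂ V₂]
    [NormedAddCommGroup V₃] [InnerProductSpace ℂ V₃] [FiniteDimensional ℂ V₃]
    (d₁ : V₁ →ₗ[ℂ] V₂) (d₂ : V₂ →ₗ[ℂ] V₃) (S₁ : V₂ →ₗ[ℂ] V₁) (S₂ : V₃ →ₗ[ℂ] V₂)
    (hdd : d₂ ∘ₗ d₁ = 0)
    (hS₁a : ∀ y ∈ LinearMap.range d₁, S₁ y ∈ (LinearMap.ker d₁)ᗮ ∧ d₁ (S₁ y) = y)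
    (hS₁b : ∀ y ∈ (LinearMap.range d₁)ᗮ, S₁ y = 0)
    (hS₂a : ∀ y ∈ LinearMap.range d₂, S₂ y ∈ (LinearMap.ker d₂)ᗮ ∧ d₂ (S₂ y) = y)
    (b : V₁ →ₗ[ℂ] V₁ →ₗ[ℂ] V₂) (b2 : V₂ →ₗ[ℂ] V₁ →ₗ[ℂ] V₃)
    (C : ℝ) (hC : 0 ≤ C)
    (hbC : ∀ x y, ‖b x y‖ ≤ C * ‖x‖ * ‖y‖)
    (hb2C : ∀ x y, ‖b2 x y‖ ≤ C * ‖x‖ * ‖y‖)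
    (hder : ∀ x : V₁, d₂ (b x x) = (2 : ℂ) • b2 (d₁ x) x)
    (hJac : ∀ x : V₁, b2 (b x x) x = 0)
    (r : ℕ) (η : Fin r → V₁) (hη : ∀ ν, d₁ (η ν) = 0)
    (φ : ℕ → (Fin r → ℂ) → V₁)
    (hφ0 : ∀ t, φ 0 t = 0)
    (hφ1 : ∀ t, φ 1 t = ∑ ν, t ν • η ν)
    (hφk : ∀ k, 2 ≤ k → ∀ t, φ k t =
      (2 : ℂ)⁻¹ • S₁ (∑ j ∈ Finset.Ioo 0 k, b (φ j t) (φ (k - j) t))) :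
    ∃ ε > (0 : ℝ), ∀ t : Fin r → ℂ, (∀ ν, ‖t ν‖ < ε) →
      (d₁ (∑' k, φ k t) = (2 : ℂ)⁻¹ • b (∑' k, φ k t) (∑' k, φ k t) ↔
        Submodule.orthogonalProjectionOnto (LinearMap.ker d₂ ⊓ LinearMap.ker S₁)
          (b (∑' k, φ k t) (∑' k, φ k t)) = 0) := by
  set S₂' := LinearMap.toContinuousLinearMap S₂
  let Q := (ContinuousLinearMap.compL ℂ V₁ V₂ V₁
    ((2 : ℂ)⁻¹ • LinearMap.toContinuousLinearMap S₁)).comp (b.mkContinuous₂ C hbC)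
  have hQ : ∀ x y, Q x y = (2 : ℂ)⁻¹ • S₁ (b x y) := fun _ _ => by simp [Q]
  -- `‖φ₁‖ A < 1` gives both `16 ‖Q‖ ‖φ₁‖ ≤ 1` and `‖∂̄†‖ C (4 ‖φ₁‖) < 1`
  set A := 16 * ‖Q‖ + 4 * (‖S₂'‖ * C)
  have hcont : Continuous fun t : Fin r → ℂ => ‖∑ ν, t ν • η ν‖ * A := by fun_prop
  have h0 : ‖∑ ν, (0 : Fin r → ℂ) ν • η ν‖ * A < 1 := by simp
  obtain ⟨ε, hε, hsmall⟩ :=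
    Metric.eventually_nhds_iff.mp ((hcont.tendsto 0).eventually (gt_mem_nhds h0))
  refine ⟨ε, hε, fun t ht => ?_⟩
  have hmA : ‖φ 1 t‖ * A < 1 := by
    rw [hφ1]; exact hsmall (by simpa [dist_zero_right, pi_norm_lt_iff hε] using ht)
  have hQm : 16 * ‖Q‖ * ‖φ 1 t‖ ≤ 1 := by
    nlinarith [show 0 ≤ ‖S₂'‖ * C * ‖φ 1 t‖ by positivity]
  have hrec : ∀ k, 2 ≤ k → φ k t = ∑ j ∈ Finset.Ioo 0 k, Q (φ j t) (φ (k - j) t) := fun k hk => by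
    simp [hQ, hφk k hk t, map_sum, Finset.smul_sum]
  have hsum := summable_norm_of_kuranishi Q (hφ0 t) hrec le_rfl hQm
  have hΦ_norm := norm_tsum_le_of_kuranishi Q (hφ0 t) hrec le_rfl hQm
  have hΦ := tsum_eq_add_apply_tsum_of_kuranishi Q (hφ0 t) hrec hsum
  set Φ := ∑' k, φ k t
  refine maurerCartan_iff_orthogonalProjection_eq_zero hdd hS₁a hS₁b hS₂a hder hJac
    (norm_nonneg S₂') S₂'.le_opNorm hb2C ?_ ?_
  · conv_lhs => rw [hΦ]
    simp [hQ, hφ1, hη]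
  · calc ‖S₂'‖ * C * ‖Φ‖ ≤ ‖S₂'‖ * C * (4 * ‖φ 1 t‖) := by gcongr
      _ ≤ ‖φ 1 t‖ * A := by nlinarith [show 0 ≤ ‖Q‖ * ‖φ 1 t‖ by positivity]
      _ < 1 := hmA

/-- for the Kuranishi power series `φ(t) = ∑_k φ_k(t)` defined by the recursion
`φ₁ = ∑_ν η_ν t_ν`, `φ_k = ½ ∂̄† ∑_{0<j<k}[φ_j, φ_{k-j}]`, and for small `t`, the
Maurer-Cartan equation `∂̄φ(t) = ½[φ(t),φ(t)]` holds if and only if the harmonic projection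
`H^{0,2}[φ(t),φ(t)]` vanishes.  (`V₁, V₂, V₃` model `Λ^{0,q}⊗g^{1,0}` for `q = 1,2,3`, with
differentials `d₁, d₂`, Moore-Penrose inverses `S₁, S₂`, Frölicher-Nijenhuis brackets
`b : V₁×V₁→V₂` and `b2 : V₂×V₁→V₃` satisfying the derivation rule `∂̄[x,x] = 2[∂̄x,x]`, the
graded Jacobi identity `[[x,x],x] = 0`, and norm bounds; the harmonic space in `V₂` is
`ker d₂ ⊓ ker S₁`.) -/
theorem kuranishi_maurerCartan_iff_harmonic_obstruction
    {V₁ V₂ V₃ : Type*}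
    [NormedAddCommGroup V₁] [InnerProductSpace ℂ V₁] [FiniteDimensional ℂ V₁]
    [NormedAddCommGroup V₂] [InnerProductSpace ℂ V₂] [FiniteDimensional ℂ V₂]
    [NormedAddCommGroup V₃] [InnerProductSpace ℂ V₃] [FiniteDimensional ℂ V₃]
    (d₁ : V₁ →ₗ[ℂ] V₂) (d₂ : V₂ →ₗ[ℂ] V₃) (S₁ : V₂ →ₗ[ℂ] V₁) (S₂ : V₃ →ₗ[ℂ] V₂)
    (hdd : d₂ ∘ₗ d₁ = 0)
    (hS₁a : ∀ y ∈ LinearMap.range d₁, S₁ y ∈ (LinearMap.ker d₁)ᗮ ∧ d₁ (S₁ y) = y)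
    (hS₁b : ∀ y ∈ (LinearMap.range d₁)ᗮ, S₁ y = 0)
    (hS₂a : ∀ y ∈ LinearMap.range d₂, S₂ y ∈ (LinearMap.ker d₂)ᗮ ∧ d₂ (S₂ y) = y)
    (hS₂b : ∀ y ∈ (LinearMap.range d₂)ᗮ, S₂ y = 0)
    (b : V₁ →ₗ[ℂ] V₁ →ₗ[ℂ] V₂) (b2 : V₂ →ₗ[ℂ] V₁ →ₗ[ℂ] V₃)
    (hbsymm : ∀ x y, b x y = b y x)
    (C : ℝ) (hC : 0 ≤ C)
    (hbC : ∀ x y, ‖b x y‖ ≤ C * ‖x‖ * ‖y‖)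
    (hb2C : ∀ x y, ‖b2 x y‖ ≤ C * ‖x‖ * ‖y‖)
    (hder : ∀ x : V₁, d₂ (b x x) = (2 : ℂ) • b2 (d₁ x) x)
    (hJac : ∀ x : V₁, b2 (b x x) x = 0)
    (r : ℕ) (η : Fin r → V₁) (hη : ∀ ν, d₁ (η ν) = 0)
    (φ : ℕ → (Fin r → ℂ) → V₁)
    (hφ0 : ∀ t, φ 0 t = 0)
    (hφ1 : ∀ t, φ 1 t = ∑ ν, t ν • η ν)
    (hφk : ∀ k, 2 ≤ k → ∀ t, φ k t =
      (2 : ℂ)⁻¹ • S₁ (∑ j ∈ Finset.Ioo 0 k, b (φ j t) (φ (k - j) t))) :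
    ∃ ε > (0 : ℝ), ∀ t : Fin r → ℂ, (∀ ν, ‖t ν‖ < ε) →
      (d₁ (∑' k, φ k t) = (2 : ℂ)⁻¹ • b (∑' k, φ k t) (∑' k, φ k t) ↔
        Submodule.orthogonalProjectionOnto (LinearMap.ker d₂ ⊓ LinearMap.ker S₁)
          (b (∑' k, φ k t) (∑' k, φ k t)) = 0) :=
  kuranishi_maurerCartan_iff_harmonic_obstruction_general d₁ d₂ S₁ S₂ hdd hS₁a hS₁b hS₂a b b2 C hC
    hbC hb2C hder hJac r η hη φ hφ0 hφ1 hφk
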